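/- arXiv:1908.08324 — 2 statements merged into one kernel-verified Lean document; each statement's English description precedes it below -/
import Mathlib

section
/- Let H be a combinatorial strata structure endowed with a datum (N, {P_J}) of nodal struse, and let B be a nodal block of N in H. Then the following three properties are equivalent: (a) B ⊆ N*; (b) Cl_H(B) ⊆ N; (c) Cl_H(B) ⊆ N*. -/
/-- A combinatorial strata structure with minimal set of indices the (finite) type `I`:
an open subset of `𝒫(I)` (i.e. a family closed under taking subsets) containing all
singletons. -/
def IsCSS {I : Type*} (H : Set (Finset I)) : Prop :=
  (∀ J ∈ H, ∀ J' : Finset I, J' ⊆ J → J' ∈ H) ∧ ∀ i : I, ({i} : Finset I) ∈ H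

/-- `level H k` is `H(k)`, the set of strata of `H` with exactly `k` elements. -/
def level {I : Type*} (H : Set (Finset I)) (k : ℕ) : Set (Finset I) :=
  {J ∈ H | J.card = k}

/-- A `k`-path in `H`: a nonempty sequence of strata of `H(k)` such that the union of
any two consecutive entries lies in `H(k+1)`. -/
def IsKPath {I : Type*} [DecidableEq I] (H : Set (Finset I)) (k : ℕ)
    (γ : List (Finset I)) : Prop :=
  γ ≠ [] ∧ (∀ J ∈ γ, J ∈ level H k) ∧
    γ.Chain' fun J J' => (J ∪ J') ∈ level H (k + 1)

/-- The path `γ` joins `J` and `J'`. -/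
def Joins {I : Type*} (γ : List (Finset I)) (J J' : Finset I) : Prop :=
  γ.head? = some J ∧ γ.getLast? = some J'

/-- The subsupport of a path: the sequence of unions of consecutive entries. -/
def subSup {I : Type*} [DecidableEq I] (γ : List (Finset I)) : List (Finset I) :=
  List.zipWith (· ∪ ·) γ γ.tail

open Classical in
/-- `kappa B γ`: the number of entries of the subsupport of `γ` that belong to `B`. -/
noncomputable def kappa {I : Type*} [DecidableEq I] (B : Set (Finset I))
    (γ : List (Finset I)) : ℕ :=
  (subSup γ).countP fun J => decide (J ∈ B)

/-- `A` is `k`-connected in `H`: any two elements of `A` are joined by a `k`-path in `H`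
with support contained in `A`. -/
def KConnectedIn {I : Type*} [DecidableEq I] (H : Set (Finset I)) (k : ℕ)
    (A : Set (Finset I)) : Prop :=
  ∀ J ∈ A, ∀ J' ∈ A, ∃ γ : List (Finset I),
    IsKPath H k γ ∧ Joins γ J J' ∧ ∀ K ∈ γ, K ∈ A

/-- `C` is a `k`-connected component of `A` in `H`: a maximal nonempty `k`-connected
subset of `A`. -/
def IsKComponent {I : Type*} [DecidableEq I] (H : Set (Finset I)) (k : ℕ)
    (A C : Set (Finset I)) : Prop :=
  C.Nonempty ∧ C ⊆ A ∧ KConnectedIn H k C ∧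
    ∀ C' : Set (Finset I), C ⊆ C' → C' ⊆ A → KConnectedIn H k C' → C' = C

/-- `H` is 1-connected: `H(1)` is 1-connected in `H`. -/
def OneConnected {I : Type*} [DecidableEq I] (H : Set (Finset I)) : Prop :=
  KConnectedIn H 1 (level H 1)

/-- One-sided version of an elementary homotopic pair of 1-paths in `H`. -/
def ElemPairCore {I : Type*} [DecidableEq I] (H : Set (Finset I))
    (ε ε' : List (Finset I)) : Prop :=
  ε = ε'
  ∨ (∃ i₁ i₂ : I, ε = [{i₁}, {i₂}, {i₁}] ∧ ε' = [{i₁}])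
  ∨ (∃ i₁ i₂ i₃ : I, ε = [{i₁}, {i₂}] ∧ ε' = [{i₁}, {i₃}, {i₂}] ∧
      IsKPath H 2 [{i₁, i₃}, {i₃, i₂}])

/-- An elementary homotopic pair of 1-paths in `H` (up to swapping the two paths). -/
def ElemPair {I : Type*} [DecidableEq I] (H : Set (Finset I))
    (ε ε' : List (Finset I)) : Prop :=
  ElemPairCore H ε ε' ∨ ElemPairCore H ε' ε

/-- `γ₂` is obtained from `γ₁` by an elementary homotopy. -/
def ElemHomotopy {I : Type*} [DecidableEq I] (H : Set (Finset I))
    (γ₁ γ₂ : List (Finset I)) : Prop :=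
  ∃ δ ε₁ ε₂ ρ : List (Finset I),
    ElemPair H ε₁ ε₂ ∧ γ₁ = δ ++ ε₁ ++ ρ ∧ γ₂ = δ ++ ε₂ ++ ρ

/-- `γ` and `γ'` are homotopically equivalent in `H` with support in `A`: they are linked
by a finite chain of elementary homotopies in which every intermediate 1-path has
support in `A`. -/
def HomotopicIn {I : Type*} [DecidableEq I] (H A : Set (Finset I))
    (γ γ' : List (Finset I)) : Prop :=
  (IsKPath H 1 γ ∧ ∀ J ∈ γ, J ∈ A) ∧
    Relation.ReflTransGen
      (fun g₁ g₂ => ElemHomotopy H g₁ g₂ ∧ IsKPath H 1 g₂ ∧ ∀ J ∈ g₂, J ∈ A) γ γ'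

/-- A 1-connected subset `A ⊆ H(1)` is simply connected in `H`: any two 1-paths in `H`
with support in `A` joining the same strata are homotopically equivalent in `H` with
support in `A`. -/
def SimplyConnectedIn {I : Type*} [DecidableEq I] (H A : Set (Finset I)) : Prop :=
  KConnectedIn H 1 A ∧
    ∀ γ γ' : List (Finset I), IsKPath H 1 γ → IsKPath H 1 γ' →
      (∀ J ∈ γ, J ∈ A) → (∀ J ∈ γ', J ∈ A) →
      γ.head? = γ'.head? → γ.getLast? = γ'.getLast? →
      HomotopicIn H A γ γ'

/-- `H` is simply connected: `H(1)` is simply connected in `H`. -/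
def SimplyConnected {I : Type*} [DecidableEq I] (H : Set (Finset I)) : Prop :=
  SimplyConnectedIn H (level H 1)

/-- The closure of `A` in `H`: the strata of `H` containing some element of `A`. -/
def Cl {I : Type*} (H A : Set (Finset I)) : Set (Finset I) :=
  {J' ∈ H | ∃ J ∈ A, J ⊆ J'}

/-- A datum of nodal strata `(N, {P_J})` in `H`: a subset `N ⊆ H` together with, for each
`J ∈ N`, a partition `P_J = {J₊, J₋}` of `J` into two nonempty parts, such that for every
`J ∈ N` and `J' ⊆ J` one has `J' ∈ N` iff `J' ∩ J₊ ≠ ∅ ≠ J' ∩ J₋`, and in that case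
`P_{J'} = {J' ∩ J₊, J' ∩ J₋}`. -/
structure NodalDatum {I : Type*} [DecidableEq I] (H : Set (Finset I)) : Type _ where
  N : Set (Finset I)
  N_sub : N ⊆ H
  plus : Finset I → Finset I
  minus : Finset I → Finset I
  plus_nonempty : ∀ J ∈ N, (plus J).Nonempty
  minus_nonempty : ∀ J ∈ N, (minus J).Nonempty
  union_eq : ∀ J ∈ N, plus J ∪ minus J = J
  disj : ∀ J ∈ N, Disjoint (plus J) (minus J)
  mem_iff : ∀ J ∈ N, ∀ J' : Finset I, J' ⊆ J →
    (J' ∈ N ↔ (J' ∩ plus J).Nonempty ∧ (J' ∩ minus J).Nonempty)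
  part_eq : ∀ J ∈ N, ∀ J' : Finset I, J' ⊆ J → J' ∈ N →
    ({plus J', minus J'} : Set (Finset I)) = {J' ∩ plus J, J' ∩ minus J}

/-- `N*`: the set of uninterrupted nodal strata, i.e. `J ∈ N` with `Cl_H({J}) ⊆ N`. -/
def Nstar {I : Type*} [DecidableEq I] {H : Set (Finset I)} (D : NodalDatum H) :
    Set (Finset I) :=
  {J ∈ D.N | ∀ J' ∈ H, J ⊆ J' → J' ∈ D.N}

/-- A nodal block of `N` in `H`: a 2-connected component of `N(2) = N ∩ H(2)` in `H`. -/
def IsNodalBlock {I : Type*} [DecidableEq I] {H : Set (Finset I)} (D : NodalDatum H)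
    (B : Set (Finset I)) : Prop :=
  IsKComponent H 2 (D.N ∩ level H 2) B

/-- A nodal separating block: a nodal block contained in `N*`. -/
def IsSepBlock {I : Type*} [DecidableEq I] {H : Set (Finset I)} (D : NodalDatum H)
    (B : Set (Finset I)) : Prop :=
  IsNodalBlock D B ∧ B ⊆ Nstar D

/-- The separator set: the union of all nodal separating blocks. -/
def SepSet {I : Type*} [DecidableEq I] {H : Set (Finset I)} (D : NodalDatum H) :
    Set (Finset I) :=
  ⋃₀ {B | IsSepBlock D B}

/-- `A_B(i)`: the set of `{j} ∈ H(1)` joined to `{i}` by a 1-path `γ` in `H` with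
`κ_B(γ)` even. -/
def ABset {I : Type*} [DecidableEq I] (H B : Set (Finset I)) (i : I) : Set (Finset I) :=
  {J ∈ level H 1 | ∃ γ : List (Finset I),
    IsKPath H 1 γ ∧ Joins γ {i} J ∧ Even (kappa B γ)}

/-- `B_B(i)`: the set of `{j} ∈ H(1)` joined to `{i}` by a 1-path `γ` in `H` with
`κ_B(γ)` odd. -/
def BBset {I : Type*} [DecidableEq I] (H B : Set (Finset I)) (i : I) : Set (Finset I) :=
  {J ∈ level H 1 | ∃ γ : List (Finset I),
    IsKPath H 1 γ ∧ Joins γ {i} J ∧ Odd (kappa B γ)}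

/-- For a nodal block `B` of a datum of nodal strata in `H`, the
following are equivalent: `B ⊆ N*`; `Cl_H(B) ⊆ N`; `Cl_H(B) ⊆ N*`. -/
theorem nodal_block_tfae
    {I : Type*} [Fintype I] [DecidableEq I] (H : Set (Finset I))
    (hH : IsCSS H) (D : NodalDatum H)
    (B : Set (Finset I)) (hB : IsNodalBlock D B) :
    List.TFAE [B ⊆ Nstar D, Cl H B ⊆ D.N, Cl H B ⊆ Nstar D] := by
  obtain ⟨-, hBsub, -, -⟩ := hB
  tfae_have 1 → 2
  · intro h J' hJ'
    obtain ⟨hJ'H, J, hJB, hsub⟩ := hJ'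
    exact (h hJB).2 J' hJ'H hsub
  tfae_have 2 → 3
  · intro h J' hJ'
    refine ⟨h hJ', ?_⟩
    intro J'' hJ''H hsub
    obtain ⟨hJ'H, J, hJB, hJsub⟩ := hJ'
    exact h ⟨hJ''H, J, hJB, hJsub.trans hsub⟩
  tfae_have 3 → 1
  · intro h J hJ
    exact h ⟨(hBsub hJ).2.1, J, hJ, le_refl J⟩
  tfae_finish
end

section
/- Let H be a combinatorial strata structure endowed with a datum (N, {P_J}) of nodal strata. Let B be a nodal separating block of N in H and let B′ be a nodal block of N in H with B′ ≠ B. Then Cl_H(B) ∩ Cl_H(B′) = ∅. -/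
/-!
If a stratum `K` contains `J ∈ B` and `J' ∈ B'`, then `K ∈ N` because `J ∈ N*`, so
`J = {a, b}` and `J' = {a', b'}` with `a, a' ∈ K₊` and `b, b' ∈ K₋`. Then `{a, b'}` is nodal
as well, and `{a, b}, {a, b'}, {a', b'}` is a 2-path of nodal strata, since all the unions
involved lie in `𝒫(K) ⊆ H`. Hence `J'` lies in the 2-connected component `B` of `J`, and the
components `B` and `B'` meet, so they coincide.
-/

def KJoinedIn {I : Type*} [DecidableEq I] (H : Set (Finset I)) (k : ℕ) (A : Set (Finset I))
    (J J' : Finset I) : Prop :=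
  ∃ γ : List (Finset I), IsKPath H k γ ∧ Joins γ J J' ∧ ∀ K ∈ γ, K ∈ A

theorem Joins.reverse {I : Type*} {γ : List (Finset I)} {J J' : Finset I} (h : Joins γ J J') :
    Joins γ.reverse J' J :=
  ⟨by rw [List.head?_reverse, h.2], by rw [List.getLast?_reverse, h.1]⟩

section KPaths

variable {I : Type*} [DecidableEq I] {H : Set (Finset I)} {k : ℕ}

theorem IsKPath.reverse {γ : List (Finset I)} (h : IsKPath H k γ) :
    IsKPath H k γ.reverse := by
  obtain ⟨hne, hlev, hchain⟩ := h
  refine ⟨by simpa using hne, by simpa using hlev, List.isChain_reverse.mpr ?_⟩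
  exact hchain.imp fun J J' hJJ' => by rwa [Finset.union_comm]

namespace KJoinedIn

variable {A : Set (Finset I)} {X Y J : Finset I}

theorem symm (h : KJoinedIn H k A X Y) : KJoinedIn H k A Y X := by
  obtain ⟨γ, hγ, hjoins, hsupp⟩ := h
  exact ⟨γ.reverse, hγ.reverse, hjoins.reverse, fun K hK => hsupp K (List.mem_reverse.mp hK)⟩

theorem trans (h₁ : KJoinedIn H k A X J) (h₂ : KJoinedIn H k A J Y) : KJoinedIn H k A X Y := by
  obtain ⟨γ₁, ⟨-, hlev₁, hchain₁⟩, ⟨hX, hJ₁⟩, hsupp₁⟩ := h₁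
  obtain ⟨γ₂, ⟨-, hlev₂, hchain₂⟩, ⟨hJ₂, hY⟩, hsupp₂⟩ := h₂
  obtain ⟨ys, rfl⟩ := List.getLast?_eq_some_iff.mp hJ₁
  obtain ⟨zs, rfl⟩ := List.head?_eq_some_iff.mp hJ₂
  -- the two paths share the stratum `J`, which is kept only once
  have hmem : ∀ K ∈ ys ++ J :: zs, K ∈ ys ++ [J] ∨ K ∈ J :: zs := by
    simp only [List.mem_append, List.mem_cons]
    tauto
  refine ⟨ys ++ J :: zs, ⟨by simp, fun K hK => (hmem K hK).elim (hlev₁ K) (hlev₂ K),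
    List.isChain_split.mpr ⟨hchain₁, hchain₂⟩⟩, ⟨?_, ?_⟩,
    fun K hK => (hmem K hK).elim (hsupp₁ K) (hsupp₂ K)⟩
  · cases ys <;> simp_all
  · rw [List.getLast?_append, hY]
    rfl

theorem mono {A' : Set (Finset I)} (h : KJoinedIn H k A X Y) (hA : A ⊆ A') :
    KJoinedIn H k A' X Y := by
  obtain ⟨γ, hγ, hjoins, hsupp⟩ := h
  exact ⟨γ, hγ, hjoins, fun K hK => hA (hsupp K hK)⟩

theorem mem_level_left (h : KJoinedIn H k A X Y) : X ∈ level H k := by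
  obtain ⟨γ, hγ, hjoins, -⟩ := h
  exact hγ.2.1 X (List.mem_of_head? hjoins.1)

theorem of_union_mem_level (hX : X ∈ level H k) (hY : Y ∈ level H k)
    (hXY : X ∪ Y ∈ level H (k + 1)) (hXA : X ∈ A) (hYA : Y ∈ A) : KJoinedIn H k A X Y := by
  refine ⟨[X, Y], ⟨by simp, ?_, List.isChain_pair.mpr hXY⟩, ⟨rfl, rfl⟩, ?_⟩
  · simp [hX, hY]
  · simp [hXA, hYA]

end KJoinedIn

theorem kConnectedIn_of_forall_kJoinedIn {A : Set (Finset I)} {W : Finset I}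
    (h : ∀ J ∈ A, KJoinedIn H k A J W) : KConnectedIn H k A :=
  fun J hJ J' hJ' => (h J hJ).trans (h J' hJ').symm

namespace KConnectedIn

variable {A C : Set (Finset I)}

theorem kJoinedIn {J J' : Finset I} (h : KConnectedIn H k A) (hJ : J ∈ A) (hJ' : J' ∈ A) :
    KJoinedIn H k A J J' :=
  h J hJ J' hJ'

theorem union {W : Finset I} (hA : KConnectedIn H k A) (hC : KConnectedIn H k C)
    (hWA : W ∈ A) (hWC : W ∈ C) : KConnectedIn H k (A ∪ C) := by
  refine kConnectedIn_of_forall_kJoinedIn (W := W) ?_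
  rintro J (hJ | hJ)
  · exact (hA.kJoinedIn hJ hWA).mono Set.subset_union_left
  · exact (hC.kJoinedIn hJ hWC).mono Set.subset_union_right

theorem insert {X Y : Finset I} (hC : KConnectedIn H k C) (hX : X ∈ C)
    (hY : Y ∈ level H k) (hXY : X ∪ Y ∈ level H (k + 1)) : KConnectedIn H k (insert Y C) := by
  refine kConnectedIn_of_forall_kJoinedIn (W := X) ?_
  rintro J (rfl | hJ)
  · have hXlev := (hC.kJoinedIn hX hX).mem_level_left
    exact (KJoinedIn.of_union_mem_level hXlev hY hXY (Set.mem_insert_of_mem _ hX)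
      (Set.mem_insert _ _)).symm
  · exact (hC.kJoinedIn hJ hX).mono (Set.subset_insert _ _)

end KConnectedIn

namespace IsKComponent

variable {A C C' : Set (Finset I)}

theorem subset_of_kConnectedIn {S : Set (Finset I)} (hC : IsKComponent H k A C)
    (hS : KConnectedIn H k S) (hSA : S ⊆ A) {W : Finset I} (hWC : W ∈ C) (hWS : W ∈ S) :
    S ⊆ C := by
  have hunion := hC.2.2.2 (C ∪ S) Set.subset_union_left (Set.union_subset hC.2.1 hSA)
    (hC.2.2.1.union hS hWC hWS)
  exact hunion ▸ Set.subset_union_right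

theorem eq_of_mem_of_mem (hC : IsKComponent H k A C) (hC' : IsKComponent H k A C')
    {W : Finset I} (hWC : W ∈ C) (hWC' : W ∈ C') : C = C' :=
  hC'.2.2.2 C (hC.subset_of_kConnectedIn hC'.2.2.1 hC'.2.1 hWC hWC') hC.2.1 hC.2.2.1

theorem mem_of_union_mem_level {X Y : Finset I} (hC : IsKComponent H k A C) (hX : X ∈ C)
    (hYA : Y ∈ A) (hY : Y ∈ level H k) (hXY : X ∪ Y ∈ level H (k + 1)) : Y ∈ C :=
  hC.subset_of_kConnectedIn (hC.2.2.1.insert hX hY hXY) (Set.insert_subset hYA hC.2.1)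
    hX (Set.mem_insert_of_mem _ hX) (Set.mem_insert _ _)

theorem pair_mem_of_pair_mem {a b c : I} (hC : IsKComponent H 2 A C) (hA : A ⊆ level H 2)
    (hab : {a, b} ∈ C) (hac : {a, c} ∈ A) (habc : {a, b, c} ∈ H) : {a, c} ∈ C := by
  obtain rfl | hbc := eq_or_ne b c
  · exact hab
  have hcard : ∀ {x y : I}, ({x, y} : Finset I) ∈ A → x ≠ y := by
    rintro x y hxy rfl
    simpa using (hA hxy).2
  have hab' := hcard (hC.2.1 hab)
  have hac' := hcard hac
  have hunion : ({a, b} ∪ {a, c} : Finset I) = {a, b, c} := by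
    ext
    simp only [Finset.mem_union, Finset.mem_insert, Finset.mem_singleton]
    tauto
  refine hC.mem_of_union_mem_level hab hac (hA hac) ⟨hunion ▸ habc, ?_⟩
  rw [hunion]
  exact Finset.card_eq_three.mpr ⟨a, b, c, hab', hac', hbc, rfl⟩

end IsKComponent

end KPaths

namespace NodalDatum

variable {I : Type*} [DecidableEq I] {H : Set (Finset I)} (D : NodalDatum H)
  {K : Finset I} {a b : I}

theorem plus_subset (hK : K ∈ D.N) : D.plus K ⊆ K :=
  Finset.subset_union_left.trans_eq (D.union_eq K hK)

theorem minus_subset (hK : K ∈ D.N) : D.minus K ⊆ K :=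
  Finset.subset_union_right.trans_eq (D.union_eq K hK)

theorem ne_of_mem_plus_of_mem_minus (hK : K ∈ D.N) (ha : a ∈ D.plus K)
    (hb : b ∈ D.minus K) : a ≠ b := by
  rintro rfl
  exact Finset.disjoint_left.mp (D.disj K hK) ha hb

theorem pair_mem_inter_level_two (hK : K ∈ D.N) (ha : a ∈ D.plus K) (hb : b ∈ D.minus K) :
    {a, b} ∈ D.N ∩ level H 2 := by
  have hsub : {a, b} ⊆ K := by
    simp [Finset.insert_subset_iff, D.plus_subset hK ha, D.minus_subset hK hb]
  have hN : {a, b} ∈ D.N :=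
    (D.mem_iff K hK _ hsub).mpr ⟨⟨a, by simp [ha]⟩, ⟨b, by simp [hb]⟩⟩
  exact ⟨hN, D.N_sub hN, Finset.card_pair (D.ne_of_mem_plus_of_mem_minus hK ha hb)⟩

theorem exists_eq_pair {J : Finset I} (hK : K ∈ D.N) (hJK : J ⊆ K)
    (hJ : J ∈ D.N ∩ level H 2) : ∃ a ∈ D.plus K, ∃ b ∈ D.minus K, J = {a, b} := by
  obtain ⟨⟨a, ha⟩, ⟨b, hb⟩⟩ := (D.mem_iff K hK J hJK).mp hJ.1
  rw [Finset.mem_inter] at ha hb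
  refine ⟨a, ha.2, b, hb.2, (Finset.eq_of_subset_of_card_le ?_ ?_).symm⟩
  · simp [Finset.insert_subset_iff, ha.1, hb.1]
  · rw [hJ.2.2, Finset.card_pair (D.ne_of_mem_plus_of_mem_minus hK ha.2 hb.2)]

end NodalDatum

theorem closures_of_distinct_blocks_disjoint_general
    {I : Type*} [DecidableEq I] (H : Set (Finset I))
    (hH : IsCSS H) (D : NodalDatum H)
    (B B' : Set (Finset I)) (hB : IsSepBlock D B) (hB' : IsNodalBlock D B')
    (hne : B' ≠ B) :
    Cl H B ∩ Cl H B' = ∅ := by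
  rw [Set.eq_empty_iff_forall_notMem]
  rintro K ⟨⟨hKH, J, hJB, hJK⟩, -, J', hJ'B', hJ'K⟩
  have hblock : IsKComponent H 2 (D.N ∩ level H 2) B := hB.1
  have hKN : K ∈ D.N := (hB.2 hJB).2 K hKH hJK
  have htriple : ∀ {x y z : I}, x ∈ K → y ∈ K → z ∈ K → {x, y, z} ∈ H := fun hx hy hz =>
    hH.1 K hKH _ (by simp [Finset.insert_subset_iff, hx, hy, hz])
  obtain ⟨a, ha, b, hb, rfl⟩ := D.exists_eq_pair hKN hJK (hblock.2.1 hJB)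
  obtain ⟨a', ha', b', hb', rfl⟩ := D.exists_eq_pair hKN hJ'K (hB'.2.1 hJ'B')
  have haK := D.plus_subset hKN ha
  have ha'K := D.plus_subset hKN ha'
  have hbK := D.minus_subset hKN hb
  have hb'K := D.minus_subset hKN hb'
  have hab' : {a, b'} ∈ B :=
    hblock.pair_mem_of_pair_mem Set.inter_subset_right hJB
      (D.pair_mem_inter_level_two hKN ha hb') (htriple haK hbK hb'K)
  have ha'b' : {b', a'} ∈ B := by
    rw [Finset.pair_comm] at hab'
    refine hblock.pair_mem_of_pair_mem Set.inter_subset_right hab' ?_ (htriple hb'K haK ha'K)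
    exact Finset.pair_comm a' b' ▸ D.pair_mem_inter_level_two hKN ha' hb'
  exact hne (hB'.eq_of_mem_of_mem hblock hJ'B' (Finset.pair_comm a' b' ▸ ha'b'))

/-- If `B` is a nodal separating block and `B'` a nodal block with
`B' ≠ B`, then `Cl_H(B) ∩ Cl_H(B') = ∅`. -/
theorem closures_of_distinct_blocks_disjoint
    {I : Type*} [Fintype I] [DecidableEq I] (H : Set (Finset I))
    (hH : IsCSS H) (D : NodalDatum H)
    (B B' : Set (Finset I)) (hB : IsSepBlock D B) (hB' : IsNodalBlock D B')
    (hne : B' ≠ B) :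
    Cl H B ∩ Cl H B' = ∅ :=
  closures_of_distinct_blocks_disjoint_general H hH D B B' hB hB' hne
end
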